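/- The supersymmetric bilinear form B(a,b) = str(a*b) on the Weyl algebra A_n is nondegenerate: if B(a,b) = 0 for all b ∈ A_n then a = 0. -/

import Mathlib

open MvPolynomial

variable (n : ℕ)

/-- The single-contraction bidifferential operator `Σ π^{jk} ∂_{y^j} ⊗ ∂_{y^k}`,
acting on polynomials in a doubled set of variables: the left factor lives in the
`Sum.inl` copy, the right factor in the `Sum.inr` copy. -/
noncomputable def moyalStep (π : Matrix (Fin (2 * n)) (Fin (2 * n)) ℂ) :
    Module.End ℂ (MvPolynomial (Fin (2 * n) ⊕ Fin (2 * n)) ℂ) :=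
  ∑ j : Fin (2 * n), ∑ k : Fin (2 * n),
    π j k • ((pderiv (Sum.inl j)).toLinearMap ∘ₗ (pderiv (Sum.inr k)).toLinearMap)

/-- The Moyal star product `a ∗ b = a · exp(i ∂_{y^j}^← π^{jk} ∂_{y^k}^→) · b`
on the polynomial Weyl algebra `A_n = ℂ[y^1,…,y^{2n}]`.  Since `a` is a
polynomial, the exponential series truncates at `totalDegree a`. -/
noncomputable def moyal (π : Matrix (Fin (2 * n)) (Fin (2 * n)) ℂ)
    (a b : MvPolynomial (Fin (2 * n)) ℂ) : MvPolynomial (Fin (2 * n)) ℂ :=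
  ∑ m ∈ Finset.range (a.totalDegree + 1),
    ((Complex.I ^ m) / (m.factorial : ℂ)) •
      (rename (Sum.elim id id))
        (((moyalStep n π) ^ m) (rename Sum.inl a * rename Sum.inr b))

/-- The parity automorphism `a(y) ↦ a(-y)`. -/
noncomputable def parityMap :
    MvPolynomial (Fin (2 * n)) ℂ →ₐ[ℂ] MvPolynomial (Fin (2 * n)) ℂ :=
  aeval fun j => -(X j)

/-!
At the origin, the `m`-th term of the Moyal series of `a ∗ b` is the contraction
`∑ π^{j₁k₁} ⋯ π^{jₘkₘ} (∂_{j₁⋯jₘ} a)(0) (∂_{k₁⋯kₘ} b)(0)`. Composing `b` with the linear change of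
variables `y ↦ (π⁻¹)ᵀ y` replaces `π` by the identity matrix, and against `b = y^β ∘ (π⁻¹)ᵀ` only the
term `m = |β|` survives: `B(a, b) = i^{|β|} β! · coeff_β a`. Hence `B(a, ·) = 0` kills every
coefficient of `a`.
-/

open scoped Nat

namespace Finsupp

variable {σ : Type*}

theorem degree_sub_single_one_add {β : σ →₀ ℕ} {j : σ} (h : β j ≠ 0) :
    (β - single j 1).degree + 1 = β.degree := by
  conv_rhs => rw [← sub_add_single_one_cancel h, map_add, degree_single]

theorem mul_prod_factorial_sub_single_one [Fintype σ] {β : σ →₀ ℕ} {j : σ} (h : β j ≠ 0) :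
    β j * ∏ i, ((β - single j 1 : σ →₀ ℕ) i)! = ∏ i, (β i)! := by
  classical
  have hoff : ∀ i ∈ ({j}ᶜ : Finset σ), (β - single j 1 : σ →₀ ℕ) i = β i := fun i hi => by
    simp_all [eq_comm]
  rw [Fintype.prod_eq_mul_prod_compl j, Fintype.prod_eq_mul_prod_compl j,
    Finset.prod_congr rfl fun i hi => congrArg Nat.factorial (hoff i hi), ← mul_assoc]
  simp [Nat.mul_factorial_pred h]

end Finsupp

namespace MvPolynomial

variable {R σ τ : Type*} [CommSemiring R]

theorem pderiv_aeval [Fintype σ] (v : σ → MvPolynomial τ R) (j : τ) (p : MvPolynomial σ R) :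
    pderiv j (aeval v p) = ∑ l, aeval v (pderiv l p) * pderiv j (v l) := by
  classical
  induction p using MvPolynomial.induction_on with
  | C r => simp
  | add p q hp hq => simp only [map_add, hp, hq, add_mul, Finset.sum_add_distrib]
  | mul_X p i hp =>
    simp only [map_mul, aeval_X, pderiv_mul, hp, pderiv_X, map_add, add_mul,
      Finset.sum_add_distrib, Finset.sum_mul, Pi.single_apply, mul_ite, mul_one, mul_zero]
    congr 1
    · exact Finset.sum_congr rfl fun l _ => by ring
    · simp [apply_ite]

theorem pderiv_inr_rename_inl (j : τ) (a : MvPolynomial σ R) :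
    pderiv (Sum.inr j) (rename (Sum.inl : σ → σ ⊕ τ) a) = 0 := by
  classical
  refine pderiv_eq_zero_of_notMem_vars fun hmem => ?_
  obtain ⟨i, -, hi⟩ := Finset.mem_image.mp (vars_rename Sum.inl a hmem)
  exact Sum.inl_ne_inr hi

theorem pderiv_inl_rename_inr (j : σ) (a : MvPolynomial τ R) :
    pderiv (Sum.inl j) (rename (Sum.inr : τ → σ ⊕ τ) a) = 0 := by
  classical
  refine pderiv_eq_zero_of_notMem_vars fun hmem => ?_
  obtain ⟨i, -, hi⟩ := Finset.mem_image.mp (vars_rename Sum.inr a hmem)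
  exact Sum.inr_ne_inl hi

variable [Fintype σ]

/-- `pderivPairing M m a b = ∑_{J K : Fin m → σ} (∏ l, M (J l) (K l)) * (∂_J a)(0) * (∂_K b)(0)`,
the value at the origin of the `m`-th term of the Moyal series with Poisson matrix `M`. -/
noncomputable def pderivPairing (M : Matrix σ σ R) :
    ℕ → MvPolynomial σ R → MvPolynomial σ R →ₗ[R] R
  | 0, a => constantCoeff a • lcoeff R 0
  | m + 1, a => ∑ j, ∑ k, M j k • pderivPairing M m (pderiv j a) ∘ₗ (pderiv k).toLinearMap

@[simp]
theorem pderivPairing_zero (M : Matrix σ σ R) (a b : MvPolynomial σ R) :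
    pderivPairing M 0 a b = constantCoeff a * constantCoeff b := rfl

theorem pderivPairing_succ (M : Matrix σ σ R) (m : ℕ) (a b : MvPolynomial σ R) :
    pderivPairing M (m + 1) a b =
      ∑ j, ∑ k, M j k * pderivPairing M m (pderiv j a) (pderiv k b) := by
  simp [pderivPairing]

theorem pderivPairing_one_succ [DecidableEq σ] (m : ℕ) (a b : MvPolynomial σ R) :
    pderivPairing 1 (m + 1) a b = ∑ j, pderivPairing 1 m (pderiv j a) (pderiv j b) := by
  simp [pderivPairing_succ, Matrix.one_apply]

/-- `aeval (linearSubst N) c` is the polynomial `y ↦ c (Nᵀ y)`. -/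
noncomputable def linearSubst (N : Matrix σ σ R) (l : σ) : MvPolynomial σ R :=
  ∑ i, N i l • X i

theorem pderiv_linearSubst (N : Matrix σ σ R) (j l : σ) :
    pderiv j (linearSubst N l) = C (N j l) := by
  classical
  simp [linearSubst, Pi.single_apply, smul_eq_C_mul]

theorem constantCoeff_aeval_linearSubst (N : Matrix σ σ R) (c : MvPolynomial σ R) :
    constantCoeff (aeval (linearSubst N) c) = constantCoeff c := by
  induction c using MvPolynomial.induction_on with
  | C r => simp
  | add p q hp hq => simp only [map_add, hp, hq]
  | mul_X p i hp => simp [linearSubst]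

theorem pderiv_aeval_linearSubst (N : Matrix σ σ R) (j : σ) (c : MvPolynomial σ R) :
    pderiv j (aeval (linearSubst N) c) = ∑ l, N j l • aeval (linearSubst N) (pderiv l c) := by
  simp only [pderiv_aeval, pderiv_linearSubst, smul_eq_C_mul, mul_comm]

theorem pderivPairing_aeval_linearSubst (M N : Matrix σ σ R) (m : ℕ) (a c : MvPolynomial σ R) :
    pderivPairing M m a (aeval (linearSubst N) c) = pderivPairing (M * N) m a c := by
  induction m generalizing a c with
  | zero => rw [pderivPairing_zero, pderivPairing_zero, constantCoeff_aeval_linearSubst]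
  | succ m ih =>
    simp only [pderivPairing_succ, pderiv_aeval_linearSubst, map_sum, map_smul, smul_eq_mul, ih,
      Finset.mul_sum, Matrix.mul_apply, Finset.sum_mul]
    refine Finset.sum_congr rfl fun j _ => ?_
    rw [Finset.sum_comm]
    exact Finset.sum_congr rfl fun l _ => Finset.sum_congr rfl fun k _ => by ring

theorem pderivPairing_one_monomial [DecidableEq σ] (m : ℕ) (a : MvPolynomial σ R)
    (β : σ →₀ ℕ) (y : R) :
    pderivPairing 1 m a (monomial β y) =
      if β.degree = m then coeff β a * y * (m ! * ∏ i, (β i)! : ℕ) else 0 := by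
  induction m generalizing a β y with
  | zero =>
    by_cases hβ : β = 0
    · simp [hβ, constantCoeff_eq]
    · simp [hβ, constantCoeff_monomial, Finsupp.degree_eq_zero_iff]
  | succ m ih =>
    have hterm : ∀ j, pderivPairing 1 m (pderiv j a) (pderiv j (monomial β y)) =
        β j * if β.degree = m + 1 then coeff β a * y * (m ! * ∏ i, (β i)! : ℕ) else 0 := by
      intro j
      by_cases hj : β j = 0
      · simp [hj]
      have hdeg : (β - Finsupp.single j 1).degree = m ↔ β.degree = m + 1 := by
        rw [← Finsupp.degree_sub_single_one_add hj, add_left_inj]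
      rw [pderiv_monomial, ih, coeff_pderiv, Finsupp.sub_add_single_one_cancel hj,
        ← Finsupp.mul_prod_factorial_sub_single_one hj]
      have hpred : ((β - Finsupp.single j 1 : σ →₀ ℕ) j : R) + 1 = β j := by
        rw [Finsupp.tsub_apply, Finsupp.single_eq_same, ← Nat.cast_add_one,
          Nat.sub_one_add_one hj]
      simp only [hdeg, hpred]
      split_ifs
      · push_cast
        ring
      · simp
    rw [pderivPairing_one_succ, Finset.sum_congr rfl fun j _ => hterm j, ← Finset.sum_mul]
    split_ifs with hdeg
    · rw [← Nat.cast_sum, ← Finsupp.degree_eq_sum, hdeg, Nat.factorial_succ]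
      push_cast
      ring
    · simp

end MvPolynomial

theorem moyalStep_rename_mul (π : Matrix (Fin (2 * n)) (Fin (2 * n)) ℂ)
    (a b : MvPolynomial (Fin (2 * n)) ℂ) :
    moyalStep n π (rename Sum.inl a * rename Sum.inr b) =
      ∑ j, ∑ k, π j k • (rename Sum.inl (pderiv j a) * rename Sum.inr (pderiv k b)) := by
  simp only [moyalStep, LinearMap.sum_apply, LinearMap.smul_apply,
    LinearMap.comp_apply, Derivation.coeFn_coe, pderiv_mul, pderiv_inr_rename_inl,
    pderiv_inl_rename_inr, pderiv_rename Sum.inl_injective, pderiv_rename Sum.inr_injective,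
    zero_mul, mul_zero, zero_add, add_zero]

theorem constantCoeff_moyalStep_pow_rename_mul (π : Matrix (Fin (2 * n)) (Fin (2 * n)) ℂ)
    (m : ℕ) (a b : MvPolynomial (Fin (2 * n)) ℂ) :
    constantCoeff ((moyalStep n π ^ m) (rename Sum.inl a * rename Sum.inr b)) =
      pderivPairing π m a b := by
  induction m generalizing a b with
  | zero => simp [constantCoeff_rename]
  | succ m ih =>
    simp only [pow_succ, Module.End.mul_apply, moyalStep_rename_mul, map_sum, map_smul,
      constantCoeff_smul, ih, pderivPairing_succ, smul_eq_mul]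

theorem constantCoeff_moyal (π : Matrix (Fin (2 * n)) (Fin (2 * n)) ℂ)
    (a b : MvPolynomial (Fin (2 * n)) ℂ) :
    constantCoeff (moyal n π a b) =
      ∑ m ∈ Finset.range (a.totalDegree + 1), Complex.I ^ m / m ! * pderivPairing π m a b := by
  simp only [moyal, map_sum, constantCoeff_smul, constantCoeff_rename,
    constantCoeff_moyalStep_pow_rename_mul, smul_eq_mul]

theorem constantCoeff_moyal_aeval_linearSubst_inv {π : Matrix (Fin (2 * n)) (Fin (2 * n)) ℂ}
    (hπ : IsUnit π.det) (a : MvPolynomial (Fin (2 * n)) ℂ) (β : Fin (2 * n) →₀ ℕ) :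
    constantCoeff (moyal n π a (aeval (linearSubst π⁻¹) (monomial β (1 : ℂ)))) =
      Complex.I ^ β.degree * coeff β a * ∏ i, ((β i)! : ℂ) := by
  simp only [constantCoeff_moyal, pderivPairing_aeval_linearSubst, Matrix.mul_nonsing_inv _ hπ,
    pderivPairing_one_monomial, mul_ite, mul_zero, Finset.sum_ite_eq, Finset.mem_range]
  split_ifs with hβ
  · have hfac : (β.degree ! : ℂ) ≠ 0 := Nat.cast_ne_zero.2 β.degree.factorial_ne_zero
    push_cast
    field_simp
  · rw [coeff_eq_zero_of_totalDegree_lt (by simpa [Finsupp.degree_apply] using hβ)]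
    ring

theorem bilinear_form_nondegenerate (π : Matrix (Fin (2 * n)) (Fin (2 * n)) ℂ)
    (hnondeg : IsUnit π.det)
    (a : MvPolynomial (Fin (2 * n)) ℂ)
    (h : ∀ b : MvPolynomial (Fin (2 * n)) ℂ, constantCoeff (moyal n π a b) = 0) :
    a = 0 := by
  ext β
  have hβ := h (aeval (linearSubst π⁻¹) (monomial β (1 : ℂ)))
  rw [constantCoeff_moyal_aeval_linearSubst_inv n hnondeg] at hβ
  simpa [Complex.I_ne_zero, Finset.prod_eq_zero_iff, Nat.factorial_ne_zero] using hβ
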